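/- Given a recollement (S, T, U) and a Serre functor F on T with quasi-inverse F', there are isomorphisms Hom_T(F' i_* G X, Y) ≅ Hom_S(X, i^* Y), natural in X ∈ S and Y ∈ T, where G := i^! ∘ F ∘ i_* is the induced Serre functor on S. -/

import Mathlib

/-!
Setting: `k` a field; `S`, `T`, `U` skeletally small `k`-linear triangulated categories
with finite-dimensional Hom-spaces, `T` with split idempotents.  A recollement
`(S, T, U)` as in [BBD], and (right/left) Serre functors in the sense of
Reiten–Van den Bergh.
-/

open CategoryTheory CategoryTheory.Limits CategoryTheory.Pretriangulated

universe v₁ v₂ v₃ u₁ u₂ u₃ u₄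

/-- A right Serre structure on an endofunctor `F` of a `k`-linear category `C`:
isomorphisms `C(X, Y) ≅ C(Y, F X)^∨`, natural in `X` and `Y`.
A right Serre functor is a functor `F` equipped with such a structure. -/
structure RightSerreStructure (k : Type u₄) [Field k] (C : Type u₁) [Category.{v₁} C]
    [Preadditive C] [CategoryTheory.Linear k C] (F : C ⥤ C) where
  equiv : ∀ X Y : C, (X ⟶ Y) ≃ₗ[k] Module.Dual k (Y ⟶ F.obj X)
  naturality_left : ∀ {X X' Y : C} (f : X' ⟶ X) (φ : X ⟶ Y) (u : Y ⟶ F.obj X'),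
    equiv X' Y (f ≫ φ) u = equiv X Y φ (u ≫ F.map f)
  naturality_right : ∀ {X Y Y' : C} (φ : X ⟶ Y) (g : Y ⟶ Y') (u : Y' ⟶ F.obj X),
    equiv X Y' (φ ≫ g) u = equiv X Y φ (g ≫ u)

/-- A left Serre structure on an endofunctor `F'` of a `k`-linear category `C`:
isomorphisms `C(X, Y) ≅ C(F' Y, X)^∨`, natural in `X` and `Y`.
A left Serre functor is a functor `F'` equipped with such a structure. -/
structure LeftSerreStructure (k : Type u₄) [Field k] (C : Type u₁) [Category.{v₁} C]
    [Preadditive C] [CategoryTheory.Linear k C] (F' : C ⥤ C) where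
  equiv : ∀ X Y : C, (X ⟶ Y) ≃ₗ[k] Module.Dual k (F'.obj Y ⟶ X)
  naturality_left : ∀ {X X' Y : C} (f : X' ⟶ X) (φ : X ⟶ Y) (u : F'.obj Y ⟶ X'),
    equiv X' Y (f ≫ φ) u = equiv X Y φ (u ≫ f)
  naturality_right : ∀ {X Y Y' : C} (φ : X ⟶ Y) (g : Y ⟶ Y') (u : F'.obj Y' ⟶ X),
    equiv X Y' (φ ≫ g) u = equiv X Y φ (F'.map g ≫ u)

/-- A Serre functor: an essentially surjective right Serre functor. -/
structure SerreFunctor (k : Type u₄) [Field k] (C : Type u₁) [Category.{v₁} C]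
    [Preadditive C] [CategoryTheory.Linear k C] where
  F : C ⥤ C
  rightSerre : RightSerreStructure k C F
  essSurj : F.EssSurj

/-- A recollement of triangulated categories `(S, T, U)`:
triangulated functors `i_* = iSt : S ⥤ T`, `i^* = iUp, i^! = iSh : T ⥤ S`,
`j^* = jUp : T ⥤ U`, `j_! = jLo, j_* = jSt : U ⥤ T` with the adjunctions,
vanishing, full faithfulness and distinguished-triangle conditions of [BBD, sec. 1.4]. -/
structure Recollement (S : Type u₁) (T : Type u₂) (U : Type u₃)
    [Category.{v₁} S] [Category.{v₂} T] [Category.{v₃} U]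
    [HasZeroObject S] [HasZeroObject T] [HasZeroObject U]
    [Preadditive S] [Preadditive T] [Preadditive U]
    [HasShift S ℤ] [HasShift T ℤ] [HasShift U ℤ]
    [∀ n : ℤ, (shiftFunctor S n).Additive] [∀ n : ℤ, (shiftFunctor T n).Additive]
    [∀ n : ℤ, (shiftFunctor U n).Additive]
    [Pretriangulated S] [Pretriangulated T] [Pretriangulated U] where
  /-- `i_* : S ⥤ T` -/
  iSt : S ⥤ T
  /-- `i^* : T ⥤ S` -/
  iUp : T ⥤ S
  /-- `i^! : T ⥤ S` -/
  iSh : T ⥤ S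
  /-- `j^* : T ⥤ U` -/
  jUp : T ⥤ U
  /-- `j_! : U ⥤ T` -/
  jLo : U ⥤ T
  /-- `j_* : U ⥤ T` -/
  jSt : U ⥤ T
  [commShift_iSt : iSt.CommShift ℤ]
  [commShift_iUp : iUp.CommShift ℤ]
  [commShift_iSh : iSh.CommShift ℤ]
  [commShift_jUp : jUp.CommShift ℤ]
  [commShift_jLo : jLo.CommShift ℤ]
  [commShift_jSt : jSt.CommShift ℤ]
  [isTriangulated_iSt : iSt.IsTriangulated]
  [isTriangulated_iUp : iUp.IsTriangulated]
  [isTriangulated_iSh : iSh.IsTriangulated]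
  [isTriangulated_jUp : jUp.IsTriangulated]
  [isTriangulated_jLo : jLo.IsTriangulated]
  [isTriangulated_jSt : jSt.IsTriangulated]
  /-- `(i^*, i_*)` is an adjoint pair. -/
  adj₁ : iUp ⊣ iSt
  /-- `(i_*, i^!)` is an adjoint pair. -/
  adj₂ : iSt ⊣ iSh
  /-- `(j_!, j^*)` is an adjoint pair. -/
  adj₃ : jLo ⊣ jUp
  /-- `(j^*, j_*)` is an adjoint pair. -/
  adj₄ : jUp ⊣ jSt
  /-- `j^* ∘ i_* = 0`. -/
  zero_comp : ∀ X : S, IsZero (jUp.obj (iSt.obj X))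
  fullyFaithful_iSt : iSt.FullyFaithful
  fullyFaithful_jLo : jLo.FullyFaithful
  fullyFaithful_jSt : jSt.FullyFaithful
  /-- The distinguished triangle `i_* i^! X ⟶ X ⟶ j_* j^* X ⟶`, whose morphisms into and
  out of `X` are the counit of `(i_*, i^!)` and the unit of `(j^*, j_*)`. -/
  triangle_a : ∀ X : T, ∃ δ : jSt.obj (jUp.obj X) ⟶ (iSt.obj (iSh.obj X))⟦(1 : ℤ)⟧,
    Triangle.mk (adj₂.counit.app X) (adj₄.unit.app X) δ ∈ distTriang T
  /-- The distinguished triangle `j_! j^* X ⟶ X ⟶ i_* i^* X ⟶`, whose morphisms into and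
  out of `X` are the counit of `(j_!, j^*)` and the unit of `(i^*, i_*)`. -/
  triangle_b : ∀ X : T, ∃ δ : iSt.obj (iUp.obj X) ⟶ (jLo.obj (jUp.obj X))⟦(1 : ℤ)⟧,
    Triangle.mk (adj₃.counit.app X) (adj₁.unit.app X) δ ∈ distTriang T

/-!
The equivalence is the composite
`Hom(F' i_* G X, Y) ≅ Hom(i_* G X, F Y) ≅ Hom(Y, i_* G X)^∨ ≅ Hom(i_* i^* Y, F i_* X)^∨
  ≅ Hom(i_* X, i_* i^* Y) ≅ Hom(X, i^* Y)`
of the adjunction `F' ⊣ F`, Serre duality, the adjunctions `i^* ⊣ i_* ⊣ i^!`, Serre duality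
again and the full faithfulness of `i_*`. The third step is dualised, so it has to be `k`-linear;
since `i_*` need not be `k`-linear, it is realised by compositions inside `T`.
As the Serre pairing is perfect, a morphism `X ⟶ i^* Y` is determined by the pairings of its
image under `i_*` with all `v ≫ counit`, and naturality is checked on these pairings.
-/

namespace CategoryTheory.Adjunction

section

variable {C D : Type*} [Category C] [Category D] {L : C ⥤ D} {R : D ⥤ C}

lemma bijective_unit_comp (adj : L ⊣ R) (hR : R.FullyFaithful) (Y : C) (Z : D) :
    Function.Bijective fun v : R.obj (L.obj Y) ⟶ R.obj Z => adj.unit.app Y ≫ v := by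
  have h : (fun v : R.obj (L.obj Y) ⟶ R.obj Z => adj.unit.app Y ≫ v) =
      hR.homEquiv.symm.trans (adj.homEquiv Y Z) := by
    funext v
    simp [homEquiv_unit, Functor.FullyFaithful.homEquiv]
  exact h ▸ Equiv.bijective _

lemma bijective_comp_counit (adj : L ⊣ R) (hL : L.FullyFaithful) (Z : C) (W : D) :
    Function.Bijective fun v : L.obj Z ⟶ L.obj (R.obj W) => v ≫ adj.counit.app W := by
  have h : (fun v : L.obj Z ⟶ L.obj (R.obj W) => v ≫ adj.counit.app W) =
      hL.homEquiv.symm.trans (adj.homEquiv Z W).symm := by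
    funext v
    simp [homEquiv_counit, Functor.FullyFaithful.homEquiv]
  exact h ▸ Equiv.bijective _

end

section Linear

variable {k : Type*} [Field k] {C D : Type*} [Category C] [Category D] [Preadditive C] [Linear k C]
  {L R : C ⥤ D} {I : D ⥤ C}

/-- The hom-equivalence of `L ⋙ I ⊣ R ⋙ I`, written through composition with the unit of
`L ⊣ I` and the counit of `I ⊣ R` so that it is `k`-linear. -/
noncomputable def compHomLinearEquiv (adjL : L ⊣ I) (adjR : I ⊣ R) (hI : I.FullyFaithful)
    (Y B : C) : (I.obj (L.obj Y) ⟶ B) ≃ₗ[k] (Y ⟶ I.obj (R.obj B)) :=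
  (LinearEquiv.ofBijective (Linear.rightComp k _ (adjR.counit.app B))
      (adjR.bijective_comp_counit hI _ _)).symm ≪≫ₗ
    LinearEquiv.ofBijective (Linear.leftComp k _ (adjL.unit.app Y))
      (adjL.bijective_unit_comp hI _ _)

lemma compHomLinearEquiv_comp_counit (adjL : L ⊣ I) (adjR : I ⊣ R) (hI : I.FullyFaithful)
    (Y B : C) (v : I.obj (L.obj Y) ⟶ I.obj (R.obj B)) :
    compHomLinearEquiv (k := k) adjL adjR hI Y B (v ≫ adjR.counit.app B) =
      adjL.unit.app Y ≫ v := by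
  rw [compHomLinearEquiv, LinearEquiv.trans_apply]
  exact congrArg (adjL.unit.app Y ≫ ·)
    ((LinearEquiv.ofBijective _ (adjR.bijective_comp_counit hI _ _)).symm_apply_apply v)

end Linear

end CategoryTheory.Adjunction

namespace RightSerreStructure

variable {k : Type*} [Field k] {C : Type*} [Category C] [Preadditive C] [Linear k C] {F : C ⥤ C}

noncomputable def dualEquiv (σ : RightSerreStructure k C F) (A Y : C)
    [FiniteDimensional k (A ⟶ F.obj Y)] : (A ⟶ F.obj Y) ≃ₗ[k] Module.Dual k (Y ⟶ A) :=
  Module.evalEquiv k _ ≪≫ₗ (σ.equiv Y A).dualMap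

@[simp]
lemma dualEquiv_apply (σ : RightSerreStructure k C F) (A Y : C)
    [FiniteDimensional k (A ⟶ F.obj Y)] (u : A ⟶ F.obj Y) (w : Y ⟶ A) :
    σ.dualEquiv A Y u w = σ.equiv Y A w u :=
  rfl

variable {D : Type*} [Category D] {F' : C ⥤ C} {L R : C ⥤ D} {I : D ⥤ C}

lemma eq_of_pairing_eq (σ : RightSerreStructure k C F) (adjR : I ⊣ R) (hI : I.FullyFaithful)
    {X : D} {Y : C} {f f' : X ⟶ L.obj Y}
    (h : ∀ v : I.obj (L.obj Y) ⟶ I.obj ((I ⋙ F ⋙ R).obj X),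
      σ.equiv (I.obj X) (I.obj (L.obj Y)) (I.map f) (v ≫ adjR.counit.app (F.obj (I.obj X))) =
        σ.equiv (I.obj X) (I.obj (L.obj Y)) (I.map f') (v ≫ adjR.counit.app (F.obj (I.obj X)))) :
    f = f' := by
  apply hI.map_injective
  apply (σ.equiv _ _).injective
  ext w
  obtain ⟨v, rfl⟩ := (adjR.bijective_comp_counit hI _ _).surjective w
  exact h v

variable [∀ X Y : C, FiniteDimensional k (X ⟶ Y)] (σ : RightSerreStructure k C F)
  (adjF : F' ⊣ F) (adjL : L ⊣ I) (adjR : I ⊣ R) (hI : I.FullyFaithful)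

noncomputable def homEquivOfAdjunctions (X : D) (Y : C) :
    (F'.obj (I.obj ((I ⋙ F ⋙ R).obj X)) ⟶ Y) ≃ (X ⟶ L.obj Y) :=
  (adjF.homEquiv _ Y).trans <|
    (σ.dualEquiv _ Y ≪≫ₗ
      (adjL.compHomLinearEquiv adjR hI Y (F.obj (I.obj X))).dualMap ≪≫ₗ
      (σ.equiv (I.obj X) (I.obj (L.obj Y))).symm).toEquiv.trans
    hI.homEquiv.symm

lemma homEquivOfAdjunctions_pairing {X : D} {Y : C}
    (φ : F'.obj (I.obj ((I ⋙ F ⋙ R).obj X)) ⟶ Y)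
    (v : I.obj (L.obj Y) ⟶ I.obj ((I ⋙ F ⋙ R).obj X)) :
    σ.equiv (I.obj X) (I.obj (L.obj Y)) (I.map (σ.homEquivOfAdjunctions adjF adjL adjR hI X Y φ))
        (v ≫ adjR.counit.app (F.obj (I.obj X))) =
      σ.equiv Y _ (adjL.unit.app Y ≫ v) (adjF.homEquiv _ Y φ) := by
  simp [homEquivOfAdjunctions, Functor.FullyFaithful.homEquiv,
    Adjunction.compHomLinearEquiv_comp_counit]

lemma homEquivOfAdjunctions_comp {X : D} {Y Y' : C}
    (φ : F'.obj (I.obj ((I ⋙ F ⋙ R).obj X)) ⟶ Y) (g : Y ⟶ Y') :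
    σ.homEquivOfAdjunctions adjF adjL adjR hI X Y' (φ ≫ g) =
      σ.homEquivOfAdjunctions adjF adjL adjR hI X Y φ ≫ L.map g := by
  apply σ.eq_of_pairing_eq adjR hI
  intro v
  have hunit : g ≫ adjL.unit.app Y' = adjL.unit.app Y ≫ I.map (L.map g) :=
    adjL.unit.naturality g
  calc σ.equiv _ _ (I.map (σ.homEquivOfAdjunctions adjF adjL adjR hI X Y' (φ ≫ g)))
        (v ≫ adjR.counit.app (F.obj (I.obj X)))
      = σ.equiv Y' _ (adjL.unit.app Y' ≫ v) (adjF.homEquiv _ Y φ ≫ F.map g) := by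
        rw [homEquivOfAdjunctions_pairing, Adjunction.homEquiv_naturality_right]
    _ = σ.equiv Y _ (adjL.unit.app Y ≫ I.map (L.map g) ≫ v) (adjF.homEquiv _ Y φ) := by
        rw [← σ.naturality_left, reassoc_of% hunit]
    _ = σ.equiv _ _ (I.map (σ.homEquivOfAdjunctions adjF adjL adjR hI X Y φ))
          ((I.map (L.map g) ≫ v) ≫ adjR.counit.app (F.obj (I.obj X))) :=
        (homEquivOfAdjunctions_pairing ..).symm
    _ = _ := by rw [Functor.map_comp, σ.naturality_right, Category.assoc]

lemma homEquivOfAdjunctions_map_comp {X X' : D} {Y : C} (f : X' ⟶ X)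
    (φ : F'.obj (I.obj ((I ⋙ F ⋙ R).obj X)) ⟶ Y) :
    σ.homEquivOfAdjunctions adjF adjL adjR hI X' Y
        (F'.map (I.map ((I ⋙ F ⋙ R).map f)) ≫ φ) =
      f ≫ σ.homEquivOfAdjunctions adjF adjL adjR hI X Y φ := by
  apply σ.eq_of_pairing_eq adjR hI
  intro v
  have hcounit : I.map ((I ⋙ F ⋙ R).map f) ≫ adjR.counit.app (F.obj (I.obj X)) =
      adjR.counit.app (F.obj (I.obj X')) ≫ F.map (I.map f) :=
    adjR.counit.naturality (F.map (I.map f))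
  calc σ.equiv _ _ (I.map (σ.homEquivOfAdjunctions adjF adjL adjR hI X' Y
          (F'.map (I.map ((I ⋙ F ⋙ R).map f)) ≫ φ)))
        (v ≫ adjR.counit.app (F.obj (I.obj X')))
      = σ.equiv Y _ (adjL.unit.app Y ≫ v)
          (I.map ((I ⋙ F ⋙ R).map f) ≫ adjF.homEquiv _ Y φ) := by
        rw [homEquivOfAdjunctions_pairing, Adjunction.homEquiv_naturality_left]
    _ = σ.equiv Y _ (adjL.unit.app Y ≫ v ≫ I.map ((I ⋙ F ⋙ R).map f))
          (adjF.homEquiv _ Y φ) := by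
        rw [← σ.naturality_right, Category.assoc]
    _ = σ.equiv _ _ (I.map (σ.homEquivOfAdjunctions adjF adjL adjR hI X Y φ))
          ((v ≫ I.map ((I ⋙ F ⋙ R).map f)) ≫ adjR.counit.app (F.obj (I.obj X))) :=
        (homEquivOfAdjunctions_pairing ..).symm
    _ = _ := by
        rw [Category.assoc, hcounit, ← Category.assoc, ← σ.naturality_left, Functor.map_comp]

end RightSerreStructure

/-- Given a recollement `(S, T, U)` and a Serre functor `F` on `T` with quasi-inverse `F'`,
there are isomorphisms `Hom_T(F' i_* G X, Y) ≅ Hom_S(X, i^* Y)`, natural in `X : S` and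
`Y : T`, where `G := i^! ∘ F ∘ i_*` is the induced Serre functor on `S`. -/
theorem recollement_hom_equiv_natural
    {k : Type u₄} [Field k]
    {S : Type u₁} {T : Type u₂} {U : Type u₃}
    [Category.{v₁} S] [Category.{v₂} T] [Category.{v₃} U]
    [HasZeroObject S] [HasZeroObject T] [HasZeroObject U]
    [Preadditive S] [Preadditive T] [Preadditive U]
    [CategoryTheory.Linear k S] [CategoryTheory.Linear k T] [CategoryTheory.Linear k U]
    [HasShift S ℤ] [HasShift T ℤ] [HasShift U ℤ]
    [∀ n : ℤ, (shiftFunctor S n).Additive] [∀ n : ℤ, (shiftFunctor T n).Additive]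
    [∀ n : ℤ, (shiftFunctor U n).Additive]
    [Pretriangulated S] [Pretriangulated T] [Pretriangulated U]
    [EssentiallySmall.{v₁} S] [EssentiallySmall.{v₂} T] [EssentiallySmall.{v₃} U]
    [∀ X Y : S, FiniteDimensional k (X ⟶ Y)]
    [∀ X Y : T, FiniteDimensional k (X ⟶ Y)]
    [∀ X Y : U, FiniteDimensional k (X ⟶ Y)]
    [IsIdempotentComplete T]
    (R : Recollement S T U)
    (SF : SerreFunctor k T) (F' : T ⥤ T)
    (η : SF.F ⋙ F' ≅ 𝟭 T) (ε : F' ⋙ SF.F ≅ 𝟭 T) :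
    ∃ e : ∀ (X : S) (Y : T),
        (F'.obj (R.iSt.obj ((R.iSt ⋙ SF.F ⋙ R.iSh).obj X)) ⟶ Y) ≃ (X ⟶ R.iUp.obj Y),
      (∀ (X : S) (Y Y' : T) (φ : F'.obj (R.iSt.obj ((R.iSt ⋙ SF.F ⋙ R.iSh).obj X)) ⟶ Y)
          (g : Y ⟶ Y'), e X Y' (φ ≫ g) = e X Y φ ≫ R.iUp.map g) ∧
      (∀ (X X' : S) (Y : T) (f : X' ⟶ X)
          (φ : F'.obj (R.iSt.obj ((R.iSt ⋙ SF.F ⋙ R.iSh).obj X)) ⟶ Y),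
        e X' Y (F'.map (R.iSt.map ((R.iSt ⋙ SF.F ⋙ R.iSh).map f)) ≫ φ) = f ≫ e X Y φ) := by
  let adjF : F' ⊣ SF.F := (CategoryTheory.Equivalence.mk F' SF.F ε.symm η).toAdjunction
  exact ⟨SF.rightSerre.homEquivOfAdjunctions adjF R.adj₁ R.adj₂ R.fullyFaithful_iSt,
    fun _ _ _ => SF.rightSerre.homEquivOfAdjunctions_comp adjF R.adj₁ R.adj₂ _,
    fun _ _ _ => SF.rightSerre.homEquivOfAdjunctions_map_comp adjF R.adj₁ R.adj₂ _⟩
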